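/- arXiv:1604.01164 — 6 statements merged into one kernel-verified Lean document; each statement's English description precedes it below -/
import Mathlib

section
/- Let M be an n-maniplex. Define a relation on the faces of M (where an i-face is a connected component of M_{[n]\{i}}) by F_i ≤ F_j iff i ≤ j and F_i ∩ F_j ≠ ∅ (as vertex sets). Then ≤ is a partial order on the set of faces of M. -/
/-- An `n`-maniplex on vertex (flag) set `V`: a nonempty, connected, properly
`n`-edge-coloured simple `n`-regular graph (encoded by the fixed-point-free
involutions `σ i` giving the unique `i`-neighbour of each vertex) such that the
2-factors of colours `i`, `j` with `|i - j| > 1` are 4-cycles. -/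
structure Maniplex (n : ℕ) (V : Type) where
  nonempty : Nonempty V
  σ : Fin n → V → V
  invol : ∀ i v, σ i (σ i v) = v
  nofix : ∀ i v, σ i v ≠ v
  conn : ∀ u v : V, Relation.ReflTransGen (fun x y => ∃ i, σ i x = y) u v
  comm : ∀ i j : Fin n, (i : ℕ) + 1 < (j : ℕ) → ∀ v,
    σ i (σ j v) = σ j (σ i v) ∧ σ i v ≠ σ j v

namespace Maniplex

variable {n : ℕ} {V : Type}

/-- There is a path from `u` to `v` using only edges with colours in `A`. -/
def ReachIn (M : Maniplex n V) (A : Set (Fin n)) (u v : V) : Prop :=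
  Relation.ReflTransGen (fun x y => ∃ i ∈ A, M.σ i x = y) u v

/-- The `i`-face of `M` containing `v`: the connected component of `v` in the
spanning subgraph with all edges of colour `i` deleted. -/
def face (M : Maniplex n V) (i : Fin n) (v : V) : Set V :=
  {u | M.ReachIn {j | j ≠ i} v u}

/-- `S` is an `i`-face of `M`. -/
def IsFace (M : Maniplex n V) (i : Fin n) (S : Set V) : Prop :=
  ∃ v, S = M.face i v

end Maniplex
namespace Maniplex

variable {n : ℕ} {V : Type}

/-- The type of (proper) faces of a maniplex: a rank together with a face of that rank. -/
def FaceT (M : Maniplex n V) : Type := {F : Fin n × Set V // M.IsFace F.1 F.2}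

/-- The order on faces: `F ≤ G` iff `rank F ≤ rank G` and `F ∩ G ≠ ∅`. -/
def faceLe (M : Maniplex n V) (F G : M.FaceT) : Prop :=
  F.1.1 ≤ G.1.1 ∧ (F.1.2 ∩ G.1.2).Nonempty

/-- The faces of `M` together with adjoined minimum `none` and maximum `some none`. -/
def PFace (M : Maniplex n V) : Type := Option (Option M.FaceT)

/-- The order on `P_M` (with the improper minimum and maximum adjoined). -/
def ple (M : Maniplex n V) : M.PFace → M.PFace → Prop
  | none, _ => True
  | _, some none => True
  | some (some F), some (some G) => M.faceLe F G
  | _, _ => False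

/-- The rank function of `P_M`. -/
def prank (M : Maniplex n V) : M.PFace → ℤ
  | none => -1
  | some none => (n : ℤ)
  | some (some F) => ((F.1.1 : ℕ) : ℤ)

/-- The component intersection property: for every chain of faces, the
intersection of the faces is a connected subgraph of `M`. -/
def CIP (M : Maniplex n V) : Prop :=
  ∀ (k : ℕ) (r : Fin k → Fin n) (S : Fin k → Set V),
    (∀ a, M.IsFace (r a) (S a)) →
    (∀ a b, (S a ∩ S b).Nonempty) →
    ∀ u v : V, (∀ a, u ∈ S a) → (∀ a, v ∈ S a) →
      M.ReachIn {c | ∀ a, c ≠ r a} u v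

/-- The diamond condition for the poset `P_M`. -/
def Diamond (M : Maniplex n V) : Prop :=
  ∀ (i : Fin n) (E F : M.PFace), M.ple E F →
    M.prank E = ((i : ℕ) : ℤ) - 1 → M.prank F = ((i : ℕ) : ℤ) + 1 →
    ∃ H₁ H₂ : M.PFace, H₁ ≠ H₂ ∧
      ∀ H : M.PFace,
        (M.prank H = ((i : ℕ) : ℤ) ∧ M.ple E H ∧ M.ple H F) ↔ (H = H₁ ∨ H = H₂)

/-- A maximal chain of proper faces of `P_M`: one face of each rank,
pairwise incident. -/
def IsFlag (M : Maniplex n V) (S : Fin n → Set V) : Prop :=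
  (∀ i, M.IsFace i (S i)) ∧ ∀ i j, ((S i) ∩ (S j)).Nonempty

/-- `P_M` is faithful: every maximal chain of proper faces has a unique common vertex. -/
def Faithful (M : Maniplex n V) : Prop :=
  ∀ S : Fin n → Set V, M.IsFlag S → ∃! v : V, ∀ i, v ∈ S i

/-- Strong flag connectivity of `P_M`: any two maximal chains `Φ`, `Ψ` are joined
by a sequence of successively adjacent maximal chains all containing `Φ ∩ Ψ`. -/
def SFC (M : Maniplex n V) : Prop :=
  ∀ Φ Ψ : Fin n → Set V, M.IsFlag Φ → M.IsFlag Ψ →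
    Relation.ReflTransGen
      (fun X Y => M.IsFlag Y ∧ (∃ j, X j ≠ Y j ∧ ∀ l, l ≠ j → X l = Y l) ∧
        ∀ i, Φ i = Ψ i → Y i = Φ i) Φ Ψ

/-- The strong path intersection property. -/
def SPIP (M : Maniplex n V) : Prop :=
  ∀ (A B : Set (Fin n)) (u v : V),
    M.ReachIn A u v → M.ReachIn B u v → M.ReachIn (A ∩ B) u v

/-- The weak path intersection property. -/
def WPIP (M : Maniplex n V) : Prop :=
  ∀ i j : Fin n, i < j → ∀ u v : V,
    M.ReachIn {c | i < c} u v → M.ReachIn {c | c < j} u v →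
    M.ReachIn {c | i < c ∧ c < j} u v

/-!
Faces of equal rank that share a vertex coincide, which gives reflexivity and antisymmetry.
For transitivity let `i ≤ j ≤ k`, `x ∈ E ∩ F` and `y ∈ F ∩ G`. A path from `x` to `y` in the
`j`-face `F` avoids colour `j`; since colours on opposite sides of `j` commute, it can be
reordered to use first only colours `> j` and then only colours `< j`. The vertex `w` where the
two parts meet is joined to `x` avoiding colour `i`, and to `y` avoiding colour `k`, so
`w ∈ E ∩ G`.
-/

variable {M : Maniplex n V} {A B : Set (Fin n)} {u v : V}

theorem ReachIn.symm (h : M.ReachIn A u v) : M.ReachIn A v u :=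
  Relation.ReflTransGen.mono (fun _ _ ⟨i, hi, hs⟩ => ⟨i, hi, by rw [← hs, M.invol]⟩)
    _ _ (Relation.ReflTransGen.swap _ _ h)

theorem ReachIn.mono (hAB : A ⊆ B) (h : M.ReachIn A u v) : M.ReachIn B u v :=
  Relation.ReflTransGen.mono (fun _ _ ⟨i, hi, hs⟩ => ⟨i, hAB hi, hs⟩) _ _ h

theorem ReachIn.map_σ {d : Fin n} (hd : ∀ c ∈ A, ∀ x, M.σ c (M.σ d x) = M.σ d (M.σ c x))
    (h : M.ReachIn A u v) : M.ReachIn A (M.σ d u) (M.σ d v) :=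
  Relation.ReflTransGen.lift (M.σ d) (fun x _ ⟨c, hc, hs⟩ => ⟨c, hc, by rw [hd c hc, hs]⟩) _ _ h

theorem ReachIn.exists_above_below {j : Fin n} (h : M.ReachIn {c | c ≠ j} u v) :
    ∃ w, M.ReachIn {c | j < c} u w ∧ M.ReachIn {c | c < j} w v := by
  induction h with
  | refl => exact ⟨u, .refl, .refl⟩
  | tail _ step ih =>
    obtain ⟨w, hw_above, hw_below⟩ := ih
    obtain ⟨d, hdj, rfl⟩ := step
    rcases lt_or_gt_of_ne (hdj : d ≠ j) with hlt | hgt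
    · exact ⟨w, hw_above, hw_below.tail ⟨d, hlt, rfl⟩⟩
    · -- the new step of colour `d > j` is moved past the walk below `j`
      refine ⟨M.σ d w, hw_above.tail ⟨d, hgt, rfl⟩, hw_below.map_σ fun c (hc : c < j) x => ?_⟩
      exact (M.comm c d (by omega) x).1

theorem mem_face_self (i : Fin n) (v : V) : v ∈ M.face i v :=
  Relation.ReflTransGen.refl

theorem IsFace.eq_face_of_mem {i : Fin n} {S : Set V} (hS : M.IsFace i S) (hu : u ∈ S) :
    S = M.face i u := by
  obtain ⟨v, rfl⟩ := hS
  ext x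
  exact ⟨fun hx => Relation.ReflTransGen.trans (ReachIn.symm hu) hx,
    fun hx => Relation.ReflTransGen.trans hu hx⟩

theorem IsFace.inter_nonempty_of_le_of_le {i j k : Fin n} {E F G : Set V}
    (hE : M.IsFace i E) (hF : M.IsFace j F) (hG : M.IsFace k G) (hij : i ≤ j) (hjk : j ≤ k)
    (hEF : (E ∩ F).Nonempty) (hFG : (F ∩ G).Nonempty) : (E ∩ G).Nonempty := by
  obtain ⟨x, hxE, hxF⟩ := hEF
  obtain ⟨y, hyF, hyG⟩ := hFG
  have hxy : M.ReachIn {c | c ≠ j} x y := by rwa [hF.eq_face_of_mem hxF] at hyF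
  obtain ⟨w, hxw, hwy⟩ := hxy.exists_above_below
  refine ⟨w, ?_, ?_⟩
  · rw [hE.eq_face_of_mem hxE]
    exact hxw.mono fun c hc => (lt_of_le_of_lt hij hc).ne'
  · rw [hG.eq_face_of_mem hyG]
    exact hwy.symm.mono fun c hc => (lt_of_lt_of_le hc hjk).ne

theorem IsFace.eq_of_inter_nonempty {i : Fin n} {S T : Set V} (hS : M.IsFace i S)
    (hT : M.IsFace i T) (hST : (S ∩ T).Nonempty) : S = T := by
  obtain ⟨x, hxS, hxT⟩ := hST
  rw [hS.eq_face_of_mem hxS, hT.eq_face_of_mem hxT]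

end Maniplex

/-- The relation `F ≤ G` iff `rank F ≤ rank G` and `F ∩ G ≠ ∅` is a partial
order on the set of faces of a maniplex. -/
theorem faceLe_isPartialOrder {n : ℕ} {V : Type} (M : Maniplex n V) :
    IsPartialOrder M.FaceT M.faceLe := by
  refine { refl := ?_, trans := ?_, antisymm := ?_ }
  · rintro ⟨⟨i, S⟩, v, hS : S = M.face i v⟩
    subst hS
    exact ⟨le_rfl, v, M.mem_face_self i v, M.mem_face_self i v⟩
  · rintro ⟨⟨i, E⟩, hE⟩ ⟨⟨j, F⟩, hF⟩ ⟨⟨k, G⟩, hG⟩ ⟨hij, hEF⟩ ⟨hjk, hFG⟩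
    exact ⟨hij.trans hjk, hE.inter_nonempty_of_le_of_le hF hG hij hjk hEF hFG⟩
  · rintro ⟨⟨i, S⟩, hS⟩ ⟨⟨j, T⟩, hT⟩ ⟨hij, hST⟩ ⟨hji, -⟩
    obtain rfl : i = j := le_antisymm hij hji
    exact Subtype.ext (Prod.ext rfl (hS.eq_of_inter_nonempty hT hST))
end

section
/- Let M be an n-maniplex, F_i an i-face of M, and u, v vertices of F_i. Then there exists a vertex w in F_i such that there is a path from u to w using only edges of colours smaller than i, and a path from w to v using only edges of colours greater than i. -/
namespace MyAux

variable {n : ℕ} {V : Type}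

theorem reach_symm (M : Maniplex n V) (A : Set (Fin n)) {u v : V}
    (h : M.ReachIn A u v) : M.ReachIn A v u := by
  induction h with
  | refl => exact Relation.ReflTransGen.refl
  | tail _ hstep ih =>
    obtain ⟨j, hj, rfl⟩ := hstep
    exact Relation.ReflTransGen.head ⟨j, hj, M.invol j _⟩ ih

theorem reach_mono (M : Maniplex n V) {A B : Set (Fin n)} (hAB : A ⊆ B)
    {u v : V} (h : M.ReachIn A u v) : M.ReachIn B u v := by
  induction h with
  | refl => exact Relation.ReflTransGen.refl
  | tail _ hstep ih =>
    obtain ⟨j, hj, rfl⟩ := hstep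
    exact ih.tail ⟨j, hAB hj, rfl⟩

theorem reach_big_shift (M : Maniplex n V) (i j : Fin n) (hj : j < i)
    {x y : V} (h : M.ReachIn {c | i < c} x y) :
    M.ReachIn {c | i < c} (M.σ j x) (M.σ j y) := by
  induction h with
  | refl => exact Relation.ReflTransGen.refl
  | tail _ hstep ih =>
    obtain ⟨k, hk, rfl⟩ := hstep
    have hjk : (j : ℕ) + 1 < (k : ℕ) := by
      have h1 : (j : ℕ) < i := hj
      have h2 : (i : ℕ) < k := hk
      omega
    exact ih.tail ⟨k, hk, ((M.comm j k hjk _).1).symm⟩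

theorem decompose (M : Maniplex n V) (i : Fin n) {u v : V}
    (h : M.ReachIn {j | j ≠ i} u v) :
    ∃ w, M.ReachIn {c | c < i} u w ∧ M.ReachIn {c | i < c} w v := by
  induction h with
  | refl => exact ⟨u, Relation.ReflTransGen.refl, Relation.ReflTransGen.refl⟩
  | tail _ hstep ih =>
    obtain ⟨w, hsmall, hbig⟩ := ih
    obtain ⟨j, hj, rfl⟩ := hstep
    rcases lt_or_gt_of_ne (hj : j ≠ i) with hlt | hgt
    · exact ⟨M.σ j w, hsmall.tail ⟨j, hlt, rfl⟩,
        MyAux.reach_big_shift M i j hlt hbig⟩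
    · exact ⟨w, hsmall, hbig.tail ⟨j, hgt, rfl⟩⟩

end MyAux

/-- main -/
theorem ordered_paths {n : ℕ} {V : Type} (M : Maniplex n V) (i : Fin n)
    (F : Set V) (hF : M.IsFace i F) (u v : V) (hu : u ∈ F) (hv : v ∈ F) :
    ∃ w ∈ F, M.ReachIn {c | c < i} u w ∧ M.ReachIn {c | i < c} w v := by
  obtain ⟨v0, rfl⟩ := hF
  have huv : M.ReachIn {j | j ≠ i} u v :=
    (MyAux.reach_symm M _ hu).trans hv
  obtain ⟨w, hsmall, hbig⟩ := MyAux.decompose M i huv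
  refine ⟨w, ?_, hsmall, hbig⟩
  exact hu.trans (MyAux.reach_mono M (fun c hc => ne_of_lt hc) hsmall)
end

section
/- Let M be an n-maniplex and let u, v lie in the same connected component F of M_{[n]\{i_1,...,i_k}} where −1 = i_0 < i_1 < ... < i_k ≤ n−1 and i_{k+1} := n. Then there exist vertices u = w_0, w_1, ..., w_{k+1} = v in F such that for each j = 0,...,k there is a path from w_j to w_{j+1} using only edges of colours strictly between i_j and i_{j+1}. -/
/-!
Induct on a path from `u` to `v` avoiding the colours `i_1, …, i_k`. When the path is
extended by an edge of colour `i`, that colour lies in a unique gap `(i_a, i_{a+1})`: append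
the edge to the `a`-th segment and replace every later `w_b` by its `i`-neighbour. The later
segments only use colours `> i_{a+1} ≥ i + 1`, which commute with `i` by the 4-cycle
condition, so their paths move along with their endpoints.
-/

theorem Fin.exists_castSucc_le_lt {α : Type*} [LinearOrder α] {m : ℕ} (f : Fin (m + 1) → α)
    {x : α} (h0 : f 0 ≤ x) (hlast : x < f (Fin.last m)) :
    ∃ a : Fin m, f a.castSucc ≤ x ∧ x < f a.succ := by
  induction m with
  | zero => exact absurd (h0.trans_lt hlast) (lt_irrefl _)
  | succ m ih =>
    by_cases hx : x < f (Fin.last m).castSucc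
    · obtain ⟨a, ha⟩ := ih (f ∘ Fin.castSucc) h0 hx
      exact ⟨a.castSucc, by rw [Fin.succ_castSucc]; exact ha⟩
    · exact ⟨Fin.last m, not_lt.mp hx, hlast⟩

def gapColours {n k : ℕ} (ι : Fin (k + 2) → ℤ) (a : Fin (k + 1)) : Set (Fin n) :=
  {c | ι a.castSucc < ((c : ℕ) : ℤ) ∧ ((c : ℕ) : ℤ) < ι a.succ}

theorem exists_mem_gapColours {n k : ℕ} {ι : Fin (k + 2) → ℤ} (h0 : ι 0 = -1)
    (hlast : ι (Fin.last (k + 1)) = (n : ℤ)) {c : Fin n}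
    (hc : ∀ a : Fin k, ((c : ℕ) : ℤ) ≠ ι a.succ.castSucc) :
    ∃ a, c ∈ gapColours ι a := by
  obtain ⟨a, hle, hlt⟩ := Fin.exists_castSucc_le_lt ι (x := ((c : ℕ) : ℤ))
    (by omega) (by rw [hlast]; exact_mod_cast c.isLt)
  refine ⟨a, lt_of_le_of_ne hle ?_, hlt⟩
  cases a using Fin.cases with
  | zero => rw [Fin.castSucc_zero, h0]; omega
  | succ b => exact (hc b).symm

theorem lt_of_mem_gapColours {n k : ℕ} {ι : Fin (k + 2) → ℤ} (hmono : StrictMono ι)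
    {a b : Fin (k + 1)} (hab : a < b) {i j : Fin n} (hi : i ∈ gapColours ι a)
    (hj : j ∈ gapColours ι b) : (i : ℕ) + 1 < j := by
  have : ι a.succ ≤ ι b.castSucc := hmono.monotone (Fin.succ_le_castSucc_iff.mpr hab)
  have := hi.2
  have := hj.1
  omega

namespace Maniplex

variable {n : ℕ} {V : Type} (M : Maniplex n V)

theorem σ_comm_of_far {i j : Fin n} (h : (i : ℕ) + 1 < j ∨ (j : ℕ) + 1 < i) (v : V) :
    M.σ i (M.σ j v) = M.σ j (M.σ i v) :=
  h.elim (fun h => (M.comm i j h v).1) (fun h => (M.comm j i h v).1.symm)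

theorem ReachIn.σ {A : Set (Fin n)} {i : Fin n}
    (hA : ∀ j ∈ A, (i : ℕ) + 1 < j ∨ (j : ℕ) + 1 < i) {x y : V} (h : M.ReachIn A x y) :
    M.ReachIn A (M.σ i x) (M.σ i y) :=
  Relation.ReflTransGen.lift (M.σ i)
    (fun _ _ ⟨j, hj, hxy⟩ => ⟨j, hj, hxy ▸ (M.σ_comm_of_far (hA j hj) _).symm⟩) x y h

def moveAfter (i : Fin n) {m : ℕ} (a : Fin m) (w : Fin m → V) : Fin m → V :=
  fun c => if c ≤ a then w c else M.σ i (w c)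

theorem reachIn_gapColours_moveAfter {k : ℕ} {ι : Fin (k + 2) → ℤ} (hmono : StrictMono ι)
    {w : Fin (k + 2) → V}
    (hw : ∀ b, M.ReachIn (gapColours ι b) (w b.castSucc) (w b.succ))
    {a : Fin (k + 1)} {i : Fin n} (hi : i ∈ gapColours ι a) (b : Fin (k + 1)) :
    M.ReachIn (gapColours ι b) (M.moveAfter i a.castSucc w b.castSucc)
      (M.moveAfter i a.castSucc w b.succ) := by
  rcases lt_trichotomy b a with hba | rfl | hab
  · have h1 : b.castSucc ≤ a.castSucc := Fin.castSucc_le_castSucc_iff.mpr hba.le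
    have h2 : b.succ ≤ a.castSucc := Fin.succ_le_castSucc_iff.mpr hba
    simpa only [moveAfter, h1, h2, if_true] using hw b
  · have h2 : ¬ b.succ ≤ b.castSucc := not_le.mpr Fin.castSucc_lt_succ
    simp only [moveAfter, le_refl, h2, if_true, if_false]
    exact (hw b).tail ⟨i, hi, rfl⟩
  · have h1 : ¬ b.castSucc ≤ a.castSucc := by simpa using hab
    have h2 : ¬ b.succ ≤ a.castSucc :=
      not_le.mpr ((Fin.castSucc_lt_castSucc_iff.mpr hab).trans Fin.castSucc_lt_succ)
    simp only [moveAfter, h1, h2, if_false]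
    exact (hw b).σ M fun j hj => Or.inl (lt_of_mem_gapColours hmono hab hi hj)

end Maniplex

/-- Let `u`, `v` lie in the same connected component of `M` with the colours
`i_1 < ... < i_k` deleted (here `ι : Fin (k+2) → ℤ` lists
`-1 = i_0 < i_1 < ... < i_k < i_{k+1} = n`).  Then there are vertices
`u = w_0, w_1, ..., w_{k+1} = v` in that component such that for each
`j = 0, ..., k` there is a path from `w_j` to `w_{j+1}` using only colours
strictly between `i_j` and `i_{j+1}`. -/
theorem really_ordered_paths {n : ℕ} {V : Type} (M : Maniplex n V) (k : ℕ)
    (ι : Fin (k + 2) → ℤ) (hmono : StrictMono ι) (h0 : ι 0 = -1)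
    (hlast : ι (Fin.last (k + 1)) = (n : ℤ)) (u v : V)
    (huv : M.ReachIn {c | ∀ a : Fin k, ((c : ℕ) : ℤ) ≠ ι a.succ.castSucc} u v) :
    ∃ w : Fin (k + 2) → V, w 0 = u ∧ w (Fin.last (k + 1)) = v ∧
      (∀ a, M.ReachIn {c | ∀ a' : Fin k, ((c : ℕ) : ℤ) ≠ ι a'.succ.castSucc}
        u (w a)) ∧
      ∀ a : Fin (k + 1),
        M.ReachIn {c | ι a.castSucc < ((c : ℕ) : ℤ) ∧ ((c : ℕ) : ℤ) < ι a.succ}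
          (w a.castSucc) (w a.succ) := by
  induction huv with
  | refl => exact ⟨fun _ => u, rfl, rfl, fun _ => .refl, fun _ => .refl⟩
  | tail _ edge ih =>
    obtain ⟨w, hw0, hwlast, hwreach, hwgap⟩ := ih
    obtain ⟨i, hi, rfl⟩ := edge
    obtain ⟨a, hia⟩ := exists_mem_gapColours h0 hlast hi
    refine ⟨M.moveAfter i a.castSucc w, ?_, ?_, fun c => ?_,
      M.reachIn_gapColours_moveAfter hmono hwgap hia⟩
    · simp [Maniplex.moveAfter, hw0]
    · simp [Maniplex.moveAfter, hwlast, not_le.mpr (Fin.castSucc_lt_last a)]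
    · unfold Maniplex.moveAfter
      split_ifs
      · exact hwreach c
      · exact (hwreach c).tail ⟨i, hi, rfl⟩
end

section
/- Let P be an abstract polytope and G_P its flag graph. If two vertices v_Φ, v_Ψ of G_P are joined both by a path with edge colours in a set A and by a path with edge colours in a set B, then they are joined by a path with edge colours in A ∩ B. -/
/-- `f` is a maximal chain ("flag") of a ranked poset with rank function `rk`,
listing one element of each rank `-1, 0, ..., n`. -/
def IsRankedChain (n : ℕ) {P : Type} [Preorder P] (rk : P → ℤ)
    (f : Fin (n + 2) → P) : Prop :=
  StrictMono f ∧ ∀ m : Fin (n + 2), rk (f m) = ((m : ℕ) : ℤ) - 1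

/-- An abstract `n`-polytope structure on a partially ordered set `P`. -/
structure APolytope (n : ℕ) (P : Type) [PartialOrder P] where
  rk : P → ℤ
  bot : P
  top : P
  bot_le : ∀ x, bot ≤ x
  le_top : ∀ x, x ≤ top
  rk_bot : rk bot = -1
  rk_top : rk top = (n : ℤ)
  rk_strictMono : ∀ x y : P, x < y → rk x < rk y
  chain_full : ∀ C : Set P, IsMaxChain (· ≤ ·) C →
    ∀ m : ℤ, -1 ≤ m → m ≤ (n : ℤ) → ∃! x, x ∈ C ∧ rk x = m
  diamond : ∀ x z : P, x ≤ z → rk z = rk x + 2 →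
    ∃ y₁ y₂ : P, y₁ ≠ y₂ ∧
      ∀ y : P, (x ≤ y ∧ y ≤ z ∧ rk y = rk x + 1) ↔ (y = y₁ ∨ y = y₂)
  sfc : ∀ Φ Ψ : Fin (n + 2) → P, IsRankedChain n rk Φ → IsRankedChain n rk Ψ →
    Relation.ReflTransGen
      (fun X Y => IsRankedChain n rk Y ∧
        (∃ j, X j ≠ Y j ∧ ∀ l, l ≠ j → X l = Y l) ∧
        ∀ m, Φ m = Ψ m → Y m = Φ m) Φ Ψ

namespace APolytope

variable {n : ℕ} {P : Type} [PartialOrder P]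

/-- The flags of the polytope: maximal chains, with one element of each rank. -/
def Flag (AP : APolytope n P) : Type :=
  {f : Fin (n + 2) → P // IsRankedChain n AP.rk f}

/-- Two flags are `i`-adjacent (joined by an edge of colour `i` in the flag
graph) iff they differ exactly in their face of rank `i`. -/
def FlagAdj (AP : APolytope n P) (i : Fin n) (X Y : AP.Flag) : Prop :=
  X.1 i.succ.castSucc ≠ Y.1 i.succ.castSucc ∧
    ∀ l, l ≠ i.succ.castSucc → X.1 l = Y.1 l

/-- There is a path in the flag graph from `X` to `Y` with edge colours in `A`. -/
def FlagReachIn (AP : APolytope n P) (A : Set (Fin n)) (X Y : AP.Flag) : Prop :=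
  Relation.ReflTransGen (fun X' Y' => ∃ i ∈ A, AP.FlagAdj i X' Y') X Y

end APolytope
section Aux

variable {n : ℕ} {P : Type} [PartialOrder P]

/-- A path with colours in `A` preserves all ranks not of the form
`i.succ.castSucc` with `i ∈ A`. -/
lemma reachIn_eq_outside (AP : APolytope n P) (A : Set (Fin n)) {Φ Ψ : AP.Flag}
    (h : AP.FlagReachIn A Φ Ψ) (m : Fin (n + 2))
    (hm : ∀ i ∈ A, (i.succ.castSucc : Fin (n + 2)) ≠ m) : Φ.1 m = Ψ.1 m := by
  induction h with
  | refl => rfl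
  | tail _ hstep ih =>
    obtain ⟨i, hiA, _, heq⟩ := hstep
    exact ih.trans (heq m fun hc => hm i hiA (hc ▸ rfl))

lemma flag_zero (AP : APolytope n P) (Φ : AP.Flag) : Φ.1 0 = AP.bot := by
  have h0 : AP.rk (Φ.1 0) = -1 := by
    have := Φ.2.2 0
    simpa using this
  by_contra hne
  have hlt : AP.bot < Φ.1 0 := lt_of_le_of_ne (AP.bot_le _) (Ne.symm hne)
  have := AP.rk_strictMono _ _ hlt
  rw [AP.rk_bot, h0] at this
  exact lt_irrefl _ this

lemma flag_last (AP : APolytope n P) (Φ : AP.Flag) :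
    Φ.1 (Fin.last (n + 1)) = AP.top := by
  have h0 : AP.rk (Φ.1 (Fin.last (n + 1))) = (n : ℤ) := by
    have h := Φ.2.2 (Fin.last (n + 1))
    rw [h]; simp [Fin.last]
  by_contra hne
  have hlt : Φ.1 (Fin.last (n + 1)) < AP.top := lt_of_le_of_ne (AP.le_top _) hne
  have := AP.rk_strictMono _ _ hlt
  rw [AP.rk_top, h0] at this
  exact lt_irrefl _ this

end Aux

/-- In the flag graph of an abstract polytope, if two flags are joined both by
a path with colours in `A` and by a path with colours in `B`, then they are
joined by a path with colours in `A ∩ B`. -/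
theorem flagGraph_path_intersection {n : ℕ} {P : Type} [PartialOrder P]
    (AP : APolytope n P) (A B : Set (Fin n)) (Φ Ψ : AP.Flag)
    (hA : AP.FlagReachIn A Φ Ψ) (hB : AP.FlagReachIn B Φ Ψ) :
    AP.FlagReachIn (A ∩ B) Φ Ψ := by
  -- where Φ and Ψ differ, the rank corresponds to a colour in A ∩ B
  have hdiff : ∀ m : Fin (n + 2), Φ.1 m ≠ Ψ.1 m →
      ∃ i ∈ A ∩ B, (i.succ.castSucc : Fin (n + 2)) = m := by
    intro m hm
    by_contra hc
    push_neg at hc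
    have h1 : Φ.1 m = Ψ.1 m := by
      apply reachIn_eq_outside AP A hA m
      intro i hiA hie
      by_cases hiB : i ∈ B
      · exact hc i ⟨hiA, hiB⟩ hie
      · have := reachIn_eq_outside AP B hB m (fun j hjB hje => by
          -- if j ∈ B gives the same rank m, then i = j would put i ∈ B
          have hij : i = j := by
            have : (i.succ.castSucc : Fin (n + 2)) = j.succ.castSucc :=
              hie.trans hje.symm
            exact Fin.succ_injective _ (Fin.castSucc_injective _ this)
          exact hiB (hij ▸ hjB))
        exact absurd this hm
    exact hm h1
  have hsfc := AP.sfc Φ.1 Ψ.1 Φ.2 Ψ.2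
  -- strengthen: carry flag-ness, agreement invariant, and reachability
  have key : ∀ X : Fin (n + 2) → P,
      Relation.ReflTransGen
        (fun X Y => IsRankedChain n AP.rk Y ∧
          (∃ j, X j ≠ Y j ∧ ∀ l, l ≠ j → X l = Y l) ∧
          ∀ m, Φ.1 m = Ψ.1 m → Y m = Φ.1 m) Φ.1 X →
      ∃ hX : IsRankedChain n AP.rk X,
        (∀ m, Φ.1 m = Ψ.1 m → X m = Φ.1 m) ∧
        AP.FlagReachIn (A ∩ B) Φ ⟨X, hX⟩ := by
    intro X hX
    induction hX with
    | refl => exact ⟨Φ.2, fun m _ => rfl, Relation.ReflTransGen.refl⟩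
    | @tail X Y hXpath hstep ih =>
      obtain ⟨hXflag, hXinv, hXreach⟩ := ih
      obtain ⟨hYflag, ⟨j, hjne, hjeq⟩, hYinv⟩ := hstep
      -- Φ and Ψ must differ at j
      have hΦΨj : Φ.1 j ≠ Ψ.1 j := by
        intro heq
        exact hjne ((hXinv j heq).trans (hYinv j heq).symm)
      obtain ⟨i, hiAB, hij⟩ := hdiff j hΦΨj
      refine ⟨hYflag, hYinv, hXreach.tail ⟨i, hiAB, ?_, ?_⟩⟩
      · rw [hij]; exact hjne
      · intro l hl; exact hjeq l (by rw [← hij]; exact hl)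
  obtain ⟨hΨflag, _, hreach⟩ := key Ψ.1 hsfc
  have : (⟨Ψ.1, hΨflag⟩ : AP.Flag) = Ψ := Subtype.ext rfl
  rwa [this] at hreach
end

section
/- A maniplex M has the strong path intersection property if and only if it has the weak path intersection property. -/
/-!
In a path avoiding colour `c`, a step of colour `a > c` commutes with every later step of
colour `< c` (their colours differ by at least two), so the path can be reordered into a
segment with colours `> c` followed by one with colours `< c`. Combining such splittings with
the weak property lets one delete from a path any single colour that some other path between
the same endpoints avoids; deleting the colours of `A \ B` one at a time from an `A`-path
yields an `(A ∩ B)`-path.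

Only the commutation of colours separated by a third is used. This hypothesis is invariant
under reversing the order of the colours, which turns statements about up-sets of colours
into statements about down-sets.
-/

open Set Function

section ReachBy

variable {ι V : Type*}

def ReachBy (σ : ι → V → V) (A : Set ι) : V → V → Prop :=
  Relation.ReflTransGen fun x y => ∃ i ∈ A, σ i x = y

variable {σ : ι → V → V} {A B : Set ι} {u v : V}

theorem ReachBy.mono (hAB : A ⊆ B) (h : ReachBy σ A u v) : ReachBy σ B u v :=
  Relation.ReflTransGen.mono (fun _ _ ⟨i, hi, hσ⟩ => ⟨i, hAB hi, hσ⟩) _ _ h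

theorem ReachBy.symm (hσ : ∀ i, Involutive (σ i)) (h : ReachBy σ A u v) :
    ReachBy σ A v u := by
  induction h with
  | refl => exact .refl
  | tail _ hstep ih =>
    obtain ⟨i, hi, rfl⟩ := hstep
    exact Relation.ReflTransGen.head ⟨i, hi, hσ i _⟩ ih

theorem ReachBy.map_of_commute {i : ι} (hcomm : ∀ a ∈ A, Function.Commute (σ i) (σ a))
    (h : ReachBy σ A u v) : ReachBy σ A (σ i u) (σ i v) := by
  induction h with
  | refl => exact .refl
  | tail _ hstep ih =>
    obtain ⟨a, ha, rfl⟩ := hstep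
    exact ih.tail ⟨a, ha, (hcomm a ha _).symm⟩

variable [LinearOrder ι]

def WeakPathIntersection (σ : ι → V → V) : Prop :=
  ∀ i j, i < j → ∀ u v, ReachBy σ (Ioi i) u v → ReachBy σ (Iio j) u v →
    ReachBy σ (Ioo i j) u v

def SeparatedCommute (σ : ι → V → V) : Prop :=
  ∀ ⦃a b c⦄, a < b → b < c → Function.Commute (σ a) (σ c)

theorem SeparatedCommute.dual (hcomm : SeparatedCommute σ) :
    SeparatedCommute (σ ∘ OrderDual.ofDual) :=
  fun a b c hab hbc => (hcomm (a := OrderDual.ofDual c) (b := OrderDual.ofDual b)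
    (c := OrderDual.ofDual a) hbc hab).symm

theorem WeakPathIntersection.dual (hW : WeakPathIntersection σ) :
    WeakPathIntersection (σ ∘ OrderDual.ofDual) :=
  fun i j hij u v hi hj => (hW j i hij u v hj hi).mono fun _ hx => ⟨hx.2, hx.1⟩

theorem ReachBy.exists_split (hcomm : SeparatedCommute σ) {c : ι} (hc : c ∉ A)
    (h : ReachBy σ A u v) :
    ∃ m, ReachBy σ (A ∩ Ioi c) u m ∧ ReachBy σ (A ∩ Iio c) m v := by
  induction h with
  | refl => exact ⟨u, .refl, .refl⟩
  | tail _ hstep ih =>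
    obtain ⟨m, hum, hmw⟩ := ih
    obtain ⟨a, ha, rfl⟩ := hstep
    rcases lt_trichotomy a c with hac | rfl | hca
    · exact ⟨m, hum, hmw.tail ⟨a, ⟨ha, hac⟩, rfl⟩⟩
    · exact absurd ha hc
    · exact ⟨σ a m, hum.tail ⟨a, ⟨ha, hca⟩, rfl⟩,
        hmw.map_of_commute fun b hb => (hcomm hb.2 hca).symm⟩

variable [Finite ι]

theorem ReachBy.inter_Ioi (hσ : ∀ i, Involutive (σ i)) (hcomm : SeparatedCommute σ)
    (hW : WeakPathIntersection σ) {i : ι} (hi : ReachBy σ (Ioi i) u v)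
    (hA : ReachBy σ A u v) : ReachBy σ (A ∩ Ioi i) u v := by
  by_cases hsub : Ioi i ⊆ A
  · exact hi.mono (subset_inter hsub subset_rfl)
  obtain ⟨d, ⟨hid, hdA⟩, hd⟩ := (toFinite {x | i < x ∧ x ∉ A}).exists_minimal
    (not_subset.mp hsub)
  have hIoo : Ioo i d ⊆ A ∩ Ioi i := fun x hx =>
    ⟨by_contra fun hxA => (hd (y := x) ⟨hx.1, hxA⟩ hx.2.le).not_gt hx.2, hx.1⟩
  obtain ⟨m, hum, hmv⟩ := hA.exists_split hcomm hdA
  have hmv_Ioi : ReachBy σ (Ioi i) m v :=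
    ((hum.symm hσ).mono (inter_subset_right.trans (Ioi_subset_Ioi hid.le))).trans hi
  have hmv_Ioo : ReachBy σ (Ioo i d) m v :=
    hW i d hid m v hmv_Ioi (hmv.mono inter_subset_right)
  exact (hum.mono (inter_subset_inter_right A (Ioi_subset_Ioi hid.le))).trans
    (hmv_Ioo.mono hIoo)

theorem ReachBy.inter_Iio (hσ : ∀ i, Involutive (σ i)) (hcomm : SeparatedCommute σ)
    (hW : WeakPathIntersection σ) {j : ι} (hj : ReachBy σ (Iio j) u v)
    (hA : ReachBy σ A u v) : ReachBy σ (A ∩ Iio j) u v :=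
  -- over `ιᵒᵈ`, `Ioi (toDual j)` is definitionally `Iio j`
  ReachBy.inter_Ioi (ι := ιᵒᵈ) (σ := σ ∘ OrderDual.ofDual) (i := OrderDual.toDual j)
    (fun i => hσ i) hcomm.dual hW.dual hj hA

theorem ReachBy.diff_singleton (hσ : ∀ i, Involutive (σ i)) (hcomm : SeparatedCommute σ)
    (hW : WeakPathIntersection σ) {c : ι} (hA : ReachBy σ A u v)
    (hc : ReachBy σ {c}ᶜ u v) : ReachBy σ (A \ {c}) u v := by
  obtain ⟨m, hum, hmv⟩ := hc.exists_split hcomm (not_not_intro rfl)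
  replace hum : ReachBy σ (Ioi c) u m := hum.mono inter_subset_right
  replace hmv : ReachBy σ (Iio c) m v := hmv.mono inter_subset_right
  have hum_A : ReachBy σ (A ∪ Iio c) u m :=
    (hA.mono subset_union_left).trans ((hmv.symm hσ).mono subset_union_right)
  have hmv_A : ReachBy σ (A ∪ Ioi c) m v :=
    ((hum.symm hσ).mono subset_union_right).trans (hA.mono subset_union_left)
  have hup : ReachBy σ (A \ {c}) u m := (hum.inter_Ioi hσ hcomm hW hum_A).mono
    fun _ hx => ⟨hx.1.resolve_right (lt_asymm hx.2), hx.2.ne'⟩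
  have hdown : ReachBy σ (A \ {c}) m v := (hmv.inter_Iio hσ hcomm hW hmv_A).mono
    fun _ hx => ⟨hx.1.resolve_right (lt_asymm hx.2), hx.2.ne⟩
  exact hup.trans hdown

theorem ReachBy.inter (hσ : ∀ i, Involutive (σ i)) (hcomm : SeparatedCommute σ)
    (hW : WeakPathIntersection σ) (hA : ReachBy σ A u v) (hB : ReachBy σ B u v) :
    ReachBy σ (A ∩ B) u v := by
  rw [← Set.sdiff_sdiff_right_self]
  refine Finite.induction_on_subset (motive := fun S _ => ReachBy σ (A \ S) u v) (A \ B)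
    (toFinite _) (by simpa using hA) fun {c S} hc _ _ ih => ?_
  have hcB : ReachBy σ {c}ᶜ u v := hB.mono fun _ hx hxc => hc.2 (hxc ▸ hx)
  simpa only [Set.sdiff_sdiff, union_singleton] using ih.diff_singleton hσ hcomm hW hcB

end ReachBy

theorem Maniplex.separatedCommute_σ {n : ℕ} {V : Type} (M : Maniplex n V) :
    SeparatedCommute M.σ :=
  fun a _ c hab hbc x => (M.comm a c (by omega) x).1

/-- A maniplex has the strong path intersection property if and only if it has
the weak path intersection property. -/
theorem spip_iff_wpip {n : ℕ} {V : Type} (M : Maniplex n V) :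
    M.SPIP ↔ M.WPIP :=
  ⟨fun hS _ _ _ u v hi hj => hS _ _ u v hi hj,
    fun hW _ _ _ _ hA hB => ReachBy.inter M.invol M.separatedCommute_σ hW hA hB⟩
end

section
/- Let M be an n-maniplex with the component intersection property, and let {F_{-1}, F_0, ..., F_{i−1}, F_{i+1}, ..., F_{n−1}, F_n} be a chain of P_M missing only rank i. Then the intersection ∩_{j ≠ i} F_j, as a subgraph of M, is a single edge of colour i (two vertices joined by an i-edge). -/
/-!
The intersection is nonempty by the maniplex axioms alone. Add the faces of the chain one at
a time, from the top rank down: if `x` lies in all faces added so far, `l` is the lowest of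
their ranks and `w` lies in both `F_l` and the new face `F_a` (`a < l`), then a path from
`x` to `w` inside `F_l` avoids colour `l`. Colours below `l` commute with colours above `l`,
so the path can be reordered to use first colours `< l`, then colours `> l`; the vertex where
the two parts meet lies in `F_a` and in every face of rank `≥ l`. By the component
intersection property two common vertices are joined by a path of colour `i` alone, hence
are equal or `i`-adjacent; conversely, faces of rank `≠ i` are closed under `i`-edges.
-/

namespace Maniplex

variable {n : ℕ} {V : Type} (M : Maniplex n V)

lemma reachIn_mono {A B : Set (Fin n)} (h : A ⊆ B) {u v : V} (hr : M.ReachIn A u v) :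
    M.ReachIn B u v :=
  Relation.ReflTransGen.mono (fun _ _ ⟨c, hc, e⟩ => ⟨c, h hc, e⟩) _ _ hr

lemma reachIn_symm {A : Set (Fin n)} {u v : V} (h : M.ReachIn A u v) : M.ReachIn A v u := by
  induction h with
  | refl => exact .refl
  | tail _ step ih =>
    obtain ⟨c, hc, rfl⟩ := step
    exact .head ⟨c, hc, M.invol c _⟩ ih

lemma reachIn_sigma_of_commute {A : Set (Fin n)} {d : Fin n}
    (hcomm : ∀ c ∈ A, ∀ x : V, M.σ c (M.σ d x) = M.σ d (M.σ c x))
    {u v : V} (h : M.ReachIn A u v) : M.ReachIn A (M.σ d u) (M.σ d v) := by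
  induction h with
  | refl => exact .refl
  | tail _ step ih =>
    obtain ⟨c, hc, rfl⟩ := step
    exact ih.tail ⟨c, hc, hcomm c hc _⟩

lemma exists_reachIn_lt_reachIn_gt {k : Fin n} {u v : V} (h : M.ReachIn {c | c ≠ k} u v) :
    ∃ w, M.ReachIn {c | c < k} u w ∧ M.ReachIn {c | k < c} w v := by
  induction h with
  | refl => exact ⟨u, .refl, .refl⟩
  | tail _ step ih =>
    obtain ⟨w, huw, hwv⟩ := ih
    obtain ⟨c, hck, rfl⟩ := step
    rcases lt_or_gt_of_ne (show c ≠ k from hck) with hlt | hgt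
    · refine ⟨M.σ c w, huw.tail ⟨c, hlt, rfl⟩, M.reachIn_sigma_of_commute
        (fun c' (hc' : k < c') x => (M.comm c c' ?_ x).1.symm) hwv⟩
      have : (c : ℕ) < k := hlt
      have : (k : ℕ) < c' := hc'
      omega
    · exact ⟨w, huw, hwv.tail ⟨c, hgt, rfl⟩⟩

lemma eq_or_eq_sigma_of_reachIn_singleton {i : Fin n} {u v : V} (h : M.ReachIn {i} u v) :
    v = u ∨ v = M.σ i u := by
  induction h with
  | refl => exact .inl rfl
  | tail _ step ih =>
    obtain ⟨c, rfl, rfl⟩ := step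
    rcases ih with rfl | rfl
    · exact .inr rfl
    · exact .inl (M.invol _ _)

variable {M}

lemma IsFace.nonempty {j : Fin n} {S : Set V} (hS : M.IsFace j S) : S.Nonempty := by
  obtain ⟨v, rfl⟩ := hS
  exact ⟨v, .refl⟩

lemma IsFace.reachIn {j : Fin n} {S : Set V} (hS : M.IsFace j S) {u v : V} (hu : u ∈ S)
    (hv : v ∈ S) : M.ReachIn {c | c ≠ j} u v := by
  obtain ⟨w, rfl⟩ := hS
  exact (M.reachIn_symm hu).trans hv

lemma IsFace.mem_of_reachIn {j : Fin n} {S : Set V} (hS : M.IsFace j S) {A : Set (Fin n)}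
    (hA : j ∉ A) {u v : V} (hu : u ∈ S) (h : M.ReachIn A u v) : v ∈ S := by
  obtain ⟨w, rfl⟩ := hS
  exact Relation.ReflTransGen.trans hu (M.reachIn_mono (fun _ hc => ne_of_mem_of_not_mem hc hA) h)

lemma IsFace.sigma_mem {j : Fin n} {S : Set V} (hS : M.IsFace j S) {c : Fin n} (hc : c ≠ j)
    {u : V} (hu : u ∈ S) : M.σ c u ∈ S :=
  hS.mem_of_reachIn (A := {c}) hc.symm hu (.single ⟨c, rfl, rfl⟩)

lemma exists_mem_inter_of_pairwise_inter (S : Fin n → Set V) (T : Finset (Fin n))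
    (hface : ∀ j ∈ T, M.IsFace j (S j)) (hchain : ∀ j ∈ T, ∀ l ∈ T, (S j ∩ S l).Nonempty) :
    ∃ x, ∀ j ∈ T, x ∈ S j := by
  classical
  induction T using Finset.induction_on_min with
  | empty => exact ⟨M.nonempty.some, by simp⟩
  | insert a s has ih =>
    obtain ⟨x, hx⟩ := ih (fun j hj => hface j (Finset.mem_insert_of_mem hj))
      (fun j hj l hl => hchain j (Finset.mem_insert_of_mem hj) l (Finset.mem_insert_of_mem hl))
    have hSa := hface a (Finset.mem_insert_self a s)
    rcases s.eq_empty_or_nonempty with rfl | hs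
    · obtain ⟨v, hv⟩ := hSa.nonempty
      exact ⟨v, by simpa using hv⟩
    set l := s.min' hs
    have hl : l ∈ s := s.min'_mem hs
    obtain ⟨w, hwa, hwl⟩ :=
      hchain a (Finset.mem_insert_self a s) l (Finset.mem_insert_of_mem hl)
    obtain ⟨z, hxz, hzw⟩ := M.exists_reachIn_lt_reachIn_gt
      ((hface l (Finset.mem_insert_of_mem hl)).reachIn (hx l hl) hwl)
    refine ⟨z, Finset.forall_mem_insert _ _ _ |>.2 ⟨?_, fun j hj => ?_⟩⟩
    · exact hSa.mem_of_reachIn (has l hl).not_gt hwa (M.reachIn_symm hzw)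
    · exact (hface j (Finset.mem_insert_of_mem hj)).mem_of_reachIn (s.min'_le j hj).not_gt
        (hx j hj) hxz

lemma CIP.reachIn_singleton (hCIP : M.CIP) {i : Fin n} {S : Fin n → Set V}
    (hface : ∀ j, j ≠ i → M.IsFace j (S j))
    (hchain : ∀ j l, j ≠ i → l ≠ i → (S j ∩ S l).Nonempty)
    {u v : V} (hu : ∀ j, j ≠ i → u ∈ S j) (hv : ∀ j, j ≠ i → v ∈ S j) :
    M.ReachIn {i} u v := by
  obtain ⟨m, rfl⟩ := Nat.exists_eq_succ_of_ne_zero i.pos.ne'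
  refine M.reachIn_mono (fun c hc => ?_) <| hCIP m i.succAbove (S ∘ i.succAbove)
    (fun a => hface _ (i.succAbove_ne a)) (fun a b => hchain _ _ (i.succAbove_ne a)
    (i.succAbove_ne b)) u v (fun a => hu _ (i.succAbove_ne a))
    (fun a => hv _ (i.succAbove_ne a))
  by_contra hci
  obtain ⟨a, rfl⟩ := Fin.exists_succAbove_eq hci
  exact hc a rfl

end Maniplex

/-- In a maniplex with the component intersection property, the intersection of
the faces of a chain of `P_M` missing only rank `i` is a single edge of colour
`i`: two vertices joined by an `i`-edge. -/
theorem chain_missing_one_rank_inter_is_edge {n : ℕ} {V : Type}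
    (M : Maniplex n V) (hCIP : M.CIP) (i : Fin n) (S : Fin n → Set V)
    (hface : ∀ j, j ≠ i → M.IsFace j (S j))
    (hchain : ∀ j l, j ≠ i → l ≠ i → (S j ∩ S l).Nonempty) :
    ∃ u : V, {x : V | ∀ j, j ≠ i → x ∈ S j} = {u, M.σ i u} := by
  obtain ⟨u, hu⟩ := M.exists_mem_inter_of_pairwise_inter S (Finset.univ.erase i)
    (fun j hj => hface j (Finset.ne_of_mem_erase hj))
    (fun j hj l hl => hchain j l (Finset.ne_of_mem_erase hj) (Finset.ne_of_mem_erase hl))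
  replace hu : ∀ j, j ≠ i → u ∈ S j := fun j hj => hu j (by simp [hj])
  refine ⟨u, Set.Subset.antisymm (fun v hv => ?_) ?_⟩
  · exact M.eq_or_eq_sigma_of_reachIn_singleton (hCIP.reachIn_singleton hface hchain hu hv)
  · rintro v (rfl | rfl)
    · exact hu
    · exact fun j hj => (hface j hj).sigma_mem (Ne.symm hj) (hu j hj)
end
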